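/- Let (aₙ)ₙ≥₁ be real with ∑ aₙEⁿ of positive radius of convergence and a₁ > 0, bₙ = (n√(2π)Γ(n))/(4Γ(n+1/2))·aₙ, and W(E) = ∑ₙ≥₁ bₙ E^{(2n−1)/2} for E > 0 small. Then 2√2 ∫₀ᴱ W'(s)/√(E−s) ds = π·∑ₙ≥₁ n·aₙ·E^{n−1} for all small E > 0. -/

import Mathlib

/-!
Write W(s) = ∑ bₙ₊₁ s^(n + 1/2). On a compact subinterval of (0, ρ) the differentiated terms are
dominated by (n + 1/2) |bₙ₊₁| rⁿ with r < ρ, so W may be differentiated termwise. Each term of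
W'(s) (E - s)^(-1/2) integrates to a Beta integral, ∫₀ᴱ s^(u-1) (E - s)^(v-1) ds = E^(u+v-1) B(u, v),
and since B(n + u, v) decreases in n the integrals of the absolute values are summable, which lets
sum and integral be interchanged. Finally Γ(n + 3/2) = (n + 1/2) Γ(n + 1/2) collapses the coefficient
2√2 (n + 1/2) bₙ₊₁ B(n + 1/2, 1/2) to π (n + 1) aₙ₊₁.
-/

open Real Filter Set MeasureTheory intervalIntegral Asymptotics

lemma summable_norm_natCast_add_mul_mul_pow (α : ℝ) {c : ℕ → ℝ} {r R : ℝ} (hrR : |r| < R)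
    (hs : Summable fun n : ℕ => c n * R ^ n) :
    Summable fun n : ℕ => ‖(n + α) * c n * r ^ n‖ := by
  have hR : 0 < R := (abs_nonneg r).trans_lt hrR
  have hq : ‖r / R‖ < 1 := by
    rwa [norm_div, Real.norm_eq_abs, Real.norm_eq_abs, abs_of_pos hR, div_lt_one hR]
  have hlin : (fun n : ℕ => (n : ℝ) + α) =O[atTop] fun n : ℕ => (n : ℝ) :=
    (isBigO_refl _ _).add
      ((isLittleO_const_id_atTop α).comp_tendsto tendsto_natCast_atTop_atTop).isBigO
  have hO : (fun n : ℕ => ((n : ℝ) + α) * (c n * R ^ n)) =O[atTop] fun n => ((n ^ 1 : ℕ) : ℝ) := by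
    simpa using hlin.mul (hs.tendsto_atTop_zero.isBigO_one ℝ)
  refine (summable_norm_mul_geometric_of_norm_lt_one' hq hO).congr fun n => ?_
  rw [div_pow]
  field_simp

lemma summable_mul_pow_of_summable_mul_rpow {c : ℕ → ℝ} {α R : ℝ} (hR : 0 < R)
    (hs : Summable fun n : ℕ => c n * R ^ ((n : ℝ) + α)) :
    Summable fun n : ℕ => c n * R ^ n :=
  (hs.mul_right (R ^ α)⁻¹).congr fun n => by
    rw [rpow_add hR, rpow_natCast]
    field_simp

lemma hasDerivAt_tsum_mul_rpow_natCast_add {c : ℕ → ℝ} {α ρ x : ℝ}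
    (hs : ∀ y, 0 < y → y < ρ → Summable fun n : ℕ => c n * y ^ ((n : ℝ) + α))
    (hx : 0 < x) (hxρ : x < ρ) :
    HasDerivAt (fun y => ∑' n : ℕ, c n * y ^ ((n : ℝ) + α))
      (∑' n : ℕ, c n * ((n + α) * x ^ ((n : ℝ) + α - 1))) x := by
  obtain ⟨r, hxr, hrρ⟩ := exists_between hxρ
  obtain ⟨R, hrR, hRρ⟩ := exists_between hrρ
  have hx2 : 0 < x / 2 := half_pos hx
  have hr : 0 < r := hx.trans hxr
  have hR : 0 < R := hr.trans hrR
  obtain ⟨M, hM⟩ := isCompact_Icc.exists_bound_of_continuousOn (f := fun y : ℝ => y ^ (α - 1))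
    (s := Icc (x / 2) r) (continuousOn_id.rpow_const fun y hy => Or.inl (hx2.trans_le hy.1).ne')
  have hdom := summable_norm_natCast_add_mul_mul_pow α (by rwa [abs_of_pos hr])
    (summable_mul_pow_of_summable_mul_rpow hR (hs R hR hRρ))
  have hxmem : x ∈ Ioo (x / 2) r := ⟨by linarith, hxr⟩
  refine hasDerivAt_tsum_of_isPreconnected (u := fun n : ℕ => ‖((n : ℝ) + α) * c n * r ^ n‖ * M)
    (g := fun (n : ℕ) (y : ℝ) => c n * y ^ ((n : ℝ) + α))
    (g' := fun (n : ℕ) (y : ℝ) => c n * ((n + α) * y ^ ((n : ℝ) + α - 1)))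
    (hdom.mul_right M) isOpen_Ioo isPreconnected_Ioo
    (fun n y hy => ?_) (fun n y hy => ?_) hxmem (hs x hx hxρ) hxmem
  · have hy : y ≠ 0 := (hx2.trans hy.1).ne'
    exact (hasDerivAt_rpow_const (p := (n : ℝ) + α) (Or.inl hy)).const_mul (c n)
  · have hy0 : 0 < y := hx2.trans hy.1
    have hsplit : y ^ ((n : ℝ) + α - 1) = y ^ n * y ^ (α - 1) := by
      rw [add_sub_assoc, rpow_add hy0, rpow_natCast]
    have hpow : ‖y ^ n‖ ≤ ‖r ^ n‖ := by
      simp only [norm_pow]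
      exact pow_le_pow_left₀ (norm_nonneg _) (by simp [abs_of_pos hy0, abs_of_pos hr, hy.2.le]) n
    calc ‖c n * ((n + α) * y ^ ((n : ℝ) + α - 1))‖
        = ‖(n + α) * c n‖ * ‖y ^ n‖ * ‖y ^ (α - 1)‖ := by
          simp only [hsplit, norm_mul]; ring
      _ ≤ ‖(n + α) * c n‖ * ‖r ^ n‖ * M := by
          gcongr
          exact hM y (Ioo_subset_Icc_self hy)
      _ = ‖(n + α) * c n * r ^ n‖ * M := by simp only [norm_mul]

namespace Real

noncomputable def beta (u v : ℝ) : ℝ := Gamma u * Gamma v / Gamma (u + v)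

lemma beta_pos {u v : ℝ} (hu : 0 < u) (hv : 0 < v) : 0 < beta u v := by
  have := Gamma_pos_of_pos hu
  have := Gamma_pos_of_pos hv
  have := Gamma_pos_of_pos (add_pos hu hv)
  unfold beta
  positivity

lemma beta_add_one {u v : ℝ} (hu : 0 < u) (hv : 0 < v) :
    beta (u + 1) v = u / (u + v) * beta u v := by
  have := (Gamma_pos_of_pos (add_pos hu hv)).ne'
  unfold beta
  rw [add_right_comm, Gamma_add_one hu.ne', Gamma_add_one (add_pos hu hv).ne']
  field_simp

lemma beta_natCast_add_le (n : ℕ) {u v : ℝ} (hu : 0 < u) (hv : 0 < v) :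
    beta (n + u) v ≤ beta u v := by
  induction n with
  | zero => simp
  | succ n ih =>
    have hnu : 0 < n + u := by positivity
    rw [Nat.cast_succ, add_right_comm, beta_add_one hnu hv]
    calc (n + u) / (n + u + v) * beta (n + u) v ≤ 1 * beta (n + u) v :=
          mul_le_mul_of_nonneg_right (div_le_one_of_le₀ (by linarith) (by positivity))
            (beta_pos hnu hv).le
      _ ≤ beta u v := by rwa [one_mul]

lemma integral_rpow_mul_sub_rpow {u v E : ℝ} (hu : 0 < u) (hv : 0 < v) (hE : 0 < E) :
    ∫ s in (0 : ℝ)..E, s ^ (u - 1) * (E - s) ^ (v - 1) = E ^ (u + v - 1) * beta u v := by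
  have hΓ : Complex.Gamma (u + v : ℝ) ≠ 0 := by
    rw [Complex.Gamma_ofReal]
    exact_mod_cast (Gamma_pos_of_pos (add_pos hu hv)).ne'
  have hB : Complex.betaIntegral u v = (beta u v : ℂ) := by
    rw [beta, Complex.ofReal_div, Complex.ofReal_mul, ← Complex.Gamma_ofReal, ← Complex.Gamma_ofReal,
      ← Complex.Gamma_ofReal, eq_div_iff hΓ, Complex.ofReal_add,
      Complex.Gamma_mul_Gamma_eq_betaIntegral (by simpa using hu) (by simpa using hv), mul_comm]
  have hcomplex := Complex.betaIntegral_scaled u v hE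
  have hpow : (E : ℂ) ^ ((u : ℂ) + v - 1) = (E ^ (u + v - 1) : ℝ) := by
    rw [Complex.ofReal_cpow hE.le]
    push_cast
    rfl
  rw [hB, hpow, ← Complex.ofReal_mul] at hcomplex
  rw [← Complex.ofReal_inj, ← hcomplex, ← intervalIntegral.integral_ofReal]
  refine integral_congr fun s hs => ?_
  rw [uIcc_of_le hE.le] at hs
  push_cast
  rw [Complex.ofReal_cpow hs.1, Complex.ofReal_cpow (sub_nonneg.2 hs.2)]
  push_cast
  ring_nf

-- The Bochner integral of a non-integrable function is `0`, and this one is positive.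
lemma intervalIntegrable_rpow_mul_sub_rpow {u v E : ℝ} (hu : 0 < u) (hv : 0 < v) (hE : 0 < E) :
    IntervalIntegrable (fun s => s ^ (u - 1) * (E - s) ^ (v - 1)) volume 0 E :=
  intervalIntegrable_of_integral_ne_zero <| by
    rw [integral_rpow_mul_sub_rpow hu hv hE]
    exact (mul_pos (rpow_pos_of_pos hE _) (beta_pos hu hv)).ne'

end Real

theorem integral_deriv_tsum_mul_rpow_mul_sub_rpow {c : ℕ → ℝ} {α β ρ E : ℝ}
    (hα : 0 < α) (hβ : 0 < β)
    (hs : ∀ y, 0 < y → y < ρ → Summable fun n : ℕ => c n * y ^ ((n : ℝ) + α))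
    (hE : 0 < E) (hEρ : E < ρ) :
    ∫ s in (0 : ℝ)..E, deriv (fun y => ∑' n : ℕ, c n * y ^ ((n : ℝ) + α)) s * (E - s) ^ (β - 1) =
      ∑' n : ℕ, (n + α) * c n * beta (n + α) β * E ^ ((n : ℝ) + α + β - 1) := by
  set F : ℕ → ℝ → ℝ := fun n s => (n + α) * c n * (s ^ ((n : ℝ) + α - 1) * (E - s) ^ (β - 1))
  have hnα : ∀ n : ℕ, 0 < (n : ℝ) + α := fun n => by positivity
  have hF : ∀ n : ℕ, ∫ s in (0 : ℝ)..E, F n s =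
      (n + α) * c n * beta (n + α) β * E ^ ((n : ℝ) + α + β - 1) := fun n => by
    rw [intervalIntegral.integral_const_mul, integral_rpow_mul_sub_rpow (hnα n) hβ hE]
    ring
  have hFnorm : ∀ n : ℕ, ∫ s in (0 : ℝ)..E, ‖F n s‖ =
      ‖(n + α) * c n‖ * (beta (n + α) β * E ^ ((n : ℝ) + α + β - 1)) := fun n => by
    rw [mul_comm (beta _ _), ← integral_rpow_mul_sub_rpow (hnα n) hβ hE,
      ← intervalIntegral.integral_const_mul]
    refine integral_congr fun s hs => ?_
    rw [uIcc_of_le hE.le] at hs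
    simp only [F, norm_mul, norm_of_nonneg (rpow_nonneg hs.1 _),
      norm_of_nonneg (rpow_nonneg (sub_nonneg.2 hs.2) _)]
  have hsum : Summable fun n : ℕ => ∫ s in (0 : ℝ)..E, ‖F n s‖ := by
    obtain ⟨R, hER, hRρ⟩ := exists_between hEρ
    have hR := hE.trans hER
    have hdom := summable_norm_natCast_add_mul_mul_pow α (by rwa [abs_of_pos hE])
      (summable_mul_pow_of_summable_mul_rpow hR (hs R hR hRρ))
    refine (hdom.mul_right (beta α β * E ^ (α + β - 1))).of_nonneg_of_le (fun n => ?_) (fun n => ?_)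
    · have := beta_pos (hnα n) hβ
      rw [hFnorm]
      positivity
    · have hpow : E ^ ((n : ℝ) + α + β - 1) = E ^ n * E ^ (α + β - 1) := by
        rw [add_assoc, add_sub_assoc, rpow_add hE, rpow_natCast]
      rw [hFnorm, hpow, norm_mul _ (E ^ n), norm_of_nonneg (pow_nonneg hE.le n)]
      calc ‖(n + α) * c n‖ * (beta (n + α) β * (E ^ n * E ^ (α + β - 1)))
          ≤ ‖(n + α) * c n‖ * (beta α β * (E ^ n * E ^ (α + β - 1))) := by
            gcongr
            exact beta_natCast_add_le n hα hβ
        _ = ‖(n + α) * c n‖ * E ^ n * (beta α β * E ^ (α + β - 1)) := by ring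
  have hintegrand : ∀ s ∈ Ioc 0 E,
      deriv (fun y => ∑' n : ℕ, c n * y ^ ((n : ℝ) + α)) s * (E - s) ^ (β - 1) = ∑' n, F n s := by
    intro s hsE
    rw [(hasDerivAt_tsum_mul_rpow_natCast_add hs hsE.1 (hsE.2.trans_lt hEρ)).deriv, ← tsum_mul_right]
    exact tsum_congr fun n => by ring
  calc _ = ∫ s in (0 : ℝ)..E, ∑' n, F n s := by
        refine integral_congr_ae (ae_of_all _ fun s hs => ?_)
        rw [uIoc_of_le hE.le] at hs
        exact hintegrand s hs
    _ = ∑' n, ∫ s in (0 : ℝ)..E, F n s := by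
        simp only [integral_of_le hE.le] at hsum ⊢
        refine (integral_tsum_of_summable_integral_norm (fun n => ?_) hsum).symm
        exact ((intervalIntegrable_rpow_mul_sub_rpow (hnα n) hβ hE).const_mul _).1
    _ = _ := tsum_congr hF

lemma beta_natCast_add_half_half (n : ℕ) :
    beta (n + 1 / 2) (1 / 2) = Gamma (n + 1 / 2) * √π / Gamma (n + 1) := by
  rw [beta, ← Gamma_one_half_eq]
  ring_nf

lemma two_mul_sqrt_two_mul_coeff_mul_beta (n : ℕ) :
    2 * √2 * ((n + 1 / 2) * ((n + 1) * √(2 * π) * Gamma (n + 1) / (4 * Gamma (n + 1 + 1 / 2)))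
      * beta (n + 1 / 2) (1 / 2)) = π * (n + 1) := by
  have hΓ : 0 < Gamma (n + 1 / 2) := Gamma_pos_of_pos (by positivity)
  have hΓ' : 0 < Gamma (n + 1) := Gamma_pos_of_pos (by positivity)
  have hn : (n : ℝ) + 1 / 2 ≠ 0 := by positivity
  rw [beta_natCast_add_half_half, add_right_comm, Gamma_add_one hn, sqrt_mul zero_le_two]
  field_simp
  rw [sq_sqrt zero_le_two, sq_sqrt pi_pos.le]
  ring

theorem stmt_9_general (a b : ℕ → ℝ) (W : ℝ → ℝ) (ρ : ℝ) (hρ : 0 < ρ)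
    (hb : ∀ n : ℕ, 1 ≤ n →
      b n = (n * Real.sqrt (2 * π) * Real.Gamma n) / (4 * Real.Gamma (n + 1/2)) * a n)
    (hW : ∀ E : ℝ, 0 < E → E < ρ →
      HasSum (fun n : ℕ => b (n + 1) * E ^ (((2 * ((n:ℝ) + 1) - 1) / 2) : ℝ)) (W E)) :
    ∃ ε > (0:ℝ), ∀ E : ℝ, 0 < E → E < ε →
      2 * Real.sqrt 2 * ∫ s in (0:ℝ)..E, deriv W s / Real.sqrt (E - s) =
        π * ∑' n : ℕ, ((n:ℝ) + 1) * a (n + 1) * E ^ n := by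
  have hexp : ∀ n : ℝ, (2 * (n + 1) - 1) / 2 = n + 1 / 2 := fun n => by ring
  have hW' : ∀ y, 0 < y → y < ρ → HasSum (fun n : ℕ => b (n + 1) * y ^ ((n : ℝ) + 1 / 2)) (W y) :=
    fun y hy hyρ => by simpa only [hexp] using hW y hy hyρ
  have hWeq : EqOn W (fun y => ∑' n : ℕ, b (n + 1) * y ^ ((n : ℝ) + 1 / 2)) (Ioo 0 ρ) :=
    fun y hy => (hW' y hy.1 hy.2).tsum_eq.symm
  refine ⟨ρ, hρ, fun E hE hEρ => ?_⟩
  have hintegrand : ∫ s in (0 : ℝ)..E, deriv W s / √(E - s) = ∫ s in (0 : ℝ)..E,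
      deriv (fun y => ∑' n : ℕ, b (n + 1) * y ^ ((n : ℝ) + 1 / 2)) s * (E - s) ^ (1 / 2 - 1 : ℝ) := by
    refine integral_congr_ae (ae_of_all _ fun s hs => ?_)
    rw [uIoc_of_le hE.le] at hs
    have hsρ : s ∈ Ioo 0 ρ := ⟨hs.1, hs.2.trans_lt hEρ⟩
    rw [(hWeq.eventuallyEq_of_mem (isOpen_Ioo.mem_nhds hsρ)).deriv_eq, div_eq_mul_inv,
      sqrt_eq_rpow, ← rpow_neg (sub_nonneg.2 hs.2)]
    norm_num
  rw [hintegrand, integral_deriv_tsum_mul_rpow_mul_sub_rpow (by norm_num) (by norm_num)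
    (fun y hy hyρ => (hW' y hy hyρ).summable) hE hEρ, ← tsum_mul_left, ← tsum_mul_left]
  refine tsum_congr fun n => ?_
  have hpow : E ^ ((n : ℝ) + 1 / 2 + 1 / 2 - 1) = E ^ n := by
    rw [show (n : ℝ) + 1 / 2 + 1 / 2 - 1 = n by ring, rpow_natCast]
  rw [hpow, hb (n + 1) n.succ_pos]
  push_cast
  linear_combination (a (n + 1) * E ^ n) * two_mul_sqrt_two_mul_coeff_mul_beta n

theorem stmt_9 (a b : ℕ → ℝ) (W : ℝ → ℝ) (ρ : ℝ) (hρ : 0 < ρ)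
    (ha : ∀ E : ℝ, |E| < ρ → Summable (fun n : ℕ => a (n + 1) * E ^ (n + 1)))
    (ha1 : 0 < a 1)
    (hb : ∀ n : ℕ, 1 ≤ n →
      b n = (n * Real.sqrt (2 * π) * Real.Gamma n) / (4 * Real.Gamma (n + 1/2)) * a n)
    (hW : ∀ E : ℝ, 0 < E → E < ρ →
      HasSum (fun n : ℕ => b (n + 1) * E ^ (((2 * ((n:ℝ) + 1) - 1) / 2) : ℝ)) (W E)) :
    ∃ ε > (0:ℝ), ∀ E : ℝ, 0 < E → E < ε →
      2 * Real.sqrt 2 * ∫ s in (0:ℝ)..E, deriv W s / Real.sqrt (E - s) =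
        π * ∑' n : ℕ, ((n:ℝ) + 1) * a (n + 1) * E ^ n :=
  stmt_9_general a b W ρ hρ hb hW
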